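/- Every subset A of ℕ whose characteristic function is definable by a positive existential formula B(x,y) in ℕ such that the uniqueness property B(x,u) ∧ B(x,v) → u = v holds in ℕ* (under the interpretation extending ℕ) is either finite or cofinite. -/

import Mathlib

/-- Terms in the language {0, S, +, ·} with variables from `Fin n`. -/
inductive PTerm : ℕ → Type
  | var : ∀ {n}, Fin n → PTerm n
  | zero : ∀ {n}, PTerm n
  | succ : ∀ {n}, PTerm n → PTerm n
  | add : ∀ {n}, PTerm n → PTerm n → PTerm n
  | mul : ∀ {n}, PTerm n → PTerm n → PTerm n

/-- Evaluation of a term in a structure with 0, 1 (for successor `x + 1`), + and ·. -/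
def PTerm.eval {α : Type*} [Zero α] [One α] [Add α] [Mul α] :
    ∀ {n}, PTerm n → (Fin n → α) → α
  | _, .var i, v => v i
  | _, .zero, _ => 0
  | _, .succ t, v => t.eval v + 1
  | _, .add s t, v => s.eval v + t.eval v
  | _, .mul s t, v => s.eval v * t.eval v

/-- Positive existential formulas: built from equalities of terms by ∧, ∨, ∃. -/
inductive PForm : ℕ → Type
  | eq : ∀ {n}, PTerm n → PTerm n → PForm n
  | and : ∀ {n}, PForm n → PForm n → PForm n
  | or : ∀ {n}, PForm n → PForm n → PForm n
  | ex : ∀ {n}, PForm (n + 1) → PForm n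

/-- Classical satisfaction of a positive existential formula in a structure. -/
def PForm.Holds {α : Type*} [Zero α] [One α] [Add α] [Mul α] :
    ∀ {n}, PForm n → (Fin n → α) → Prop
  | _, .eq s t, v => s.eval v = t.eval v
  | _, .and φ ψ, v => φ.Holds v ∧ ψ.Holds v
  | _, .or φ ψ, v => φ.Holds v ∨ ψ.Holds v
  | _, .ex φ, v => ∃ a : α, φ.Holds (Fin.cons a v)

/-!
The set of assignments satisfying a positive existential formula is closed in any compact
Hausdorff structure with continuous operations: equations cut out closed sets, `∧` and `∨`
preserve closedness, and `∃` is a projection along a compact factor, which is a closed map.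
In `ℕ∞` the point `![⊤, c]` is a limit of `![m, c]` with `m` ranging over any infinite set, so if
both `A` and its complement were infinite, `B` would hold at `![⊤, 1]` and at `![⊤, 0]`.
-/

section Topological

variable {α : Type*} [TopologicalSpace α] [Zero α] [One α] [Add α] [Mul α]
  [ContinuousAdd α] [ContinuousMul α]

theorem PTerm.continuous_eval {n : ℕ} (t : PTerm n) :
    Continuous fun v : Fin n → α => t.eval v := by
  induction t with
  | var i => simp only [PTerm.eval]; exact continuous_apply i
  | zero => simp only [PTerm.eval]; exact continuous_const
  | succ t ih => simp only [PTerm.eval]; exact ih.add continuous_const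
  | add s t ihs iht => simp only [PTerm.eval]; exact ihs.add iht
  | mul s t ihs iht => simp only [PTerm.eval]; exact ihs.mul iht

theorem PForm.isClosed_setOf_holds [CompactSpace α] [T2Space α] {n : ℕ} (φ : PForm n) :
    IsClosed {v : Fin n → α | φ.Holds v} := by
  induction φ with
  | eq s t => exact isClosed_eq s.continuous_eval t.continuous_eval
  | and φ ψ ihφ ihψ => exact ihφ.inter ihψ
  | or φ ψ ihφ ihψ => exact ihφ.union ihψ
  | @ex m φ ih =>
    have hcons : Continuous fun p : α × (Fin m → α) => (Fin.cons p.1 p.2 : Fin (m + 1) → α) :=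
      continuous_fst.finCons (A := fun _ => α) continuous_snd
    have hproj := isClosedMap_snd_of_compactSpace _ (ih.preimage hcons)
    convert hproj using 1
    ext v
    simp [PForm.Holds]

end Topological

section Hom

variable {α β : Type*} [NonAssocSemiring α] [NonAssocSemiring β] (f : α →+* β)

theorem PTerm.map_eval {n : ℕ} (t : PTerm n) (v : Fin n → α) :
    f (t.eval v) = t.eval (f ∘ v) := by
  induction t with
  | var i => simp only [PTerm.eval, Function.comp_apply]
  | zero => simp only [PTerm.eval, map_zero]
  | succ t ih => simp only [PTerm.eval, map_add, map_one, ih]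
  | add s t ihs iht => simp only [PTerm.eval, map_add, ihs, iht]
  | mul s t ihs iht => simp only [PTerm.eval, map_mul, ihs, iht]

theorem PForm.Holds.map {n : ℕ} {φ : PForm n} {v : Fin n → α} (h : φ.Holds v) :
    φ.Holds (f ∘ v) := by
  induction φ with
  | eq s t => simp only [PForm.Holds, ← s.map_eval, ← t.map_eval] at h ⊢; rw [h]
  | and φ ψ ihφ ihψ => exact ⟨ihφ h.1, ihψ h.2⟩
  | or φ ψ ihφ ihψ => exact h.imp ihφ ihψ
  | ex φ ih =>
    obtain ⟨a, ha⟩ := h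
    exact ⟨f a, by simpa [Fin.comp_cons] using ih ha⟩

end Hom

theorem PForm.holds_top_of_infinite {n : ℕ} (φ : PForm (n + 1)) (v : Fin n → ℕ)
    (hinf : {m : ℕ | φ.Holds (Fin.cons m v)}.Infinite) :
    φ.Holds (Fin.cons (⊤ : ℕ∞) (Nat.cast ∘ v)) := by
  refine φ.isClosed_setOf_holds.mem_of_frequently_of_tendsto ?_
    (ENat.tendsto_natCast_nhds_top.finCons tendsto_const_nhds)
  refine (Nat.frequently_atTop_iff_infinite.2 hinf).mono fun m hm => ?_
  show φ.Holds _
  simpa only [Fin.comp_cons, Nat.coe_castRingHom] using hm.map (Nat.castRingHom ℕ∞)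

/-- Every subset A of ℕ whose characteristic function is defined by a positive
existential formula B(x,y) in ℕ, such that the uniqueness property
`B(x,u) ∧ B(x,v) → u = v` holds in ℕ* = ℕ∞, is either finite or cofinite. -/
theorem stmt_12 (A : Set ℕ) [DecidablePred (· ∈ A)] (B : PForm 2)
    (hdef : ∀ a : ℕ, B.Holds (α := ℕ) ![a, if a ∈ A then 1 else 0])
    (huniq : ∀ x u v : ℕ∞, B.Holds ![x, u] → B.Holds ![x, v] → u = v) :
    A.Finite ∨ (Aᶜ : Set ℕ).Finite := by
  have holds_top : ∀ c : ℕ, {m : ℕ | B.Holds ![m, c]}.Infinite → B.Holds ![(⊤ : ℕ∞), c] :=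
    fun c hc => by
      convert B.holds_top_of_infinite ![c] hc using 1
      ext i; fin_cases i <;> rfl
  by_contra! h
  have hone := holds_top 1 <| h.1.mono fun a ha => by simpa [ha] using hdef a
  have hzero := holds_top 0 <| h.2.mono fun a (ha : a ∉ A) => by simpa [ha] using hdef a
  exact one_ne_zero (huniq ⊤ 1 0 hone hzero)
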